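/- Assume 25 ≤ n ≤ 51. Then there exists a real number τ such that I′(1) = 0, I″(1) < 0, and J(1) < 0, where I′ and I″ denote the first and second derivatives of the polynomial function s ↦ I(s). -/

import Mathlib

/-- The polynomial `I(s)` from Proposition 10 of the paper. -/
noncomputable def Ipoly (n : ℕ) (τ s : ℝ) : ℝ :=
  ((n : ℝ) - 12) / ((n : ℝ) + 6) * (((n : ℝ) - 10) / ((n : ℝ) + 4)) * ((n : ℝ) - 8) * τ ^ 2 * s ^ 2
    + 10 * (((n : ℝ) - 12) / ((n : ℝ) + 6)) * ((n : ℝ) - 10) * τ * s ^ 3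
    + (25 * (((n : ℝ) - 12) / ((n : ℝ) + 6)) * ((n : ℝ) + 8) - 2 * ((n : ℝ) - 12) * τ) * s ^ 4
    + ((((n : ℝ) + 8) / 10) * τ - 10 * ((n : ℝ) + 12)) * s ^ 5
    + (((n : ℝ) + 8) / ((n : ℝ) - 14)) * ((3 * (n : ℝ) + 52) / 2) * s ^ 6
    - (((n : ℝ) + 8) / ((n : ℝ) - 14)) * (((n : ℝ) + 10) / ((n : ℝ) - 16)) *
        (((n : ℝ) + 24) / 10) * s ^ 7
    + (((n : ℝ) + 8) / ((n : ℝ) - 14)) * (((n : ℝ) + 10) / ((n : ℝ) - 16)) *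
        (((n : ℝ) + 12) / ((n : ℝ) - 18)) * (((n : ℝ) + 32) / 400) * s ^ 8

/-- The polynomial `J(s)` from Proposition 12 of the paper. -/
noncomputable def Jpoly (n : ℕ) (τ s : ℝ) : ℝ :=
  10 * (((n : ℝ) - 10) / ((n : ℝ) + 8)) * (((n : ℝ) - 8) / ((n : ℝ) + 6)) * τ * s ^ 2
    + (((n : ℝ) - 10) / ((n : ℝ) + 8)) * (75 - 4 * τ) * s ^ 3
    + ((3 / 10) * τ - 50) * s ^ 4
    + (23 / 2) * (((n : ℝ) + 10) / ((n : ℝ) - 12)) * s ^ 5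
    - (11 / 10) * (((n : ℝ) + 10) / ((n : ℝ) - 12)) * (((n : ℝ) + 12) / ((n : ℝ) - 14)) * s ^ 6
    + (3 / 80) * (((n : ℝ) + 10) / ((n : ℝ) - 12)) * (((n : ℝ) + 12) / ((n : ℝ) - 14)) *
        (((n : ℝ) + 14) / ((n : ℝ) - 16)) * s ^ 7

/-!
Let `P(τ) = I′(1)`, a quadratic in `τ`. Exact arithmetic gives `P(-8) ≥ 0 ≥ P(-7)` for each
`25 ≤ n ≤ 51`, so `P` has a root `τ ∈ [-8, -7]`. Writing `I(s) = ∑ cₖ sᵏ`, the difference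
`I″(1) - I′(1) = ∑ k (k - 2) cₖ` does not see `c₂`, the only coefficient quadratic in `τ`, so it is
affine in `τ`, and so is `J(1)`. Both are negative at `τ = -8` and at `τ = -7`, hence on all of
`[-8, -7]`, in particular at the root, where `I″(1) - I′(1) = I″(1)`.
-/

open Polynomial Set

noncomputable def Ipolynomial (n : ℕ) (τ : ℝ) : ℝ[X] :=
  monomial 2
      (((n : ℝ) - 12) / ((n : ℝ) + 6) * (((n : ℝ) - 10) / ((n : ℝ) + 4)) * ((n : ℝ) - 8) * τ ^ 2)
    + monomial 3 (10 * (((n : ℝ) - 12) / ((n : ℝ) + 6)) * ((n : ℝ) - 10) * τ)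
    + monomial 4
      (25 * (((n : ℝ) - 12) / ((n : ℝ) + 6)) * ((n : ℝ) + 8) - 2 * ((n : ℝ) - 12) * τ)
    + monomial 5 ((((n : ℝ) + 8) / 10) * τ - 10 * ((n : ℝ) + 12))
    + monomial 6 ((((n : ℝ) + 8) / ((n : ℝ) - 14)) * ((3 * (n : ℝ) + 52) / 2))
    - monomial 7 ((((n : ℝ) + 8) / ((n : ℝ) - 14)) * (((n : ℝ) + 10) / ((n : ℝ) - 16)) *
        (((n : ℝ) + 24) / 10))
    + monomial 8 ((((n : ℝ) + 8) / ((n : ℝ) - 14)) * (((n : ℝ) + 10) / ((n : ℝ) - 16)) *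
        (((n : ℝ) + 12) / ((n : ℝ) - 18)) * (((n : ℝ) + 32) / 400))

theorem Ipoly_eq_eval (n : ℕ) (τ : ℝ) : Ipoly n τ = fun s => (Ipolynomial n τ).eval s := by
  funext s
  simp only [Ipoly, Ipolynomial, eval_add, eval_sub, eval_monomial]

theorem deriv_Ipoly (n : ℕ) (τ s : ℝ) :
    deriv (Ipoly n τ) s = (derivative (Ipolynomial n τ)).eval s := by
  rw [Ipoly_eq_eval]
  exact Polynomial.deriv _

theorem deriv_deriv_Ipoly (n : ℕ) (τ s : ℝ) :
    deriv (deriv (Ipoly n τ)) s = (derivative (derivative (Ipolynomial n τ))).eval s := by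
  rw [funext (deriv_Ipoly n τ)]
  exact Polynomial.deriv _

theorem continuous_deriv_Ipoly_one (n : ℕ) : Continuous fun τ => deriv (Ipoly n τ) 1 := by
  simp only [deriv_Ipoly, Ipolynomial, derivative_add, derivative_sub, derivative_monomial,
    eval_add, eval_sub, eval_monomial]
  fun_prop

theorem deriv_deriv_sub_deriv_Ipoly_one_affine (n : ℕ) :
    ∃ p q : ℝ, ∀ τ, deriv (deriv (Ipoly n τ)) 1 - deriv (Ipoly n τ) 1 = p * τ + q := by
  set f : ℝ → ℝ := fun τ => deriv (deriv (Ipoly n τ)) 1 - deriv (Ipoly n τ) 1 with hf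
  refine ⟨f 1 - f 0, f 0, fun τ => ?_⟩
  simp only [hf, deriv_Ipoly, deriv_deriv_Ipoly, Ipolynomial, derivative_add, derivative_sub,
    derivative_monomial, eval_add, eval_sub, eval_monomial]
  ring

theorem Jpoly_one_affine (n : ℕ) : ∃ p q : ℝ, ∀ τ, Jpoly n τ 1 = p * τ + q :=
  ⟨Jpoly n 1 1 - Jpoly n 0 1, Jpoly n 0 1, fun τ => by simp only [Jpoly]; ring⟩

theorem lt_zero_of_affine_of_mem_Icc {f : ℝ → ℝ} (hf : ∃ p q : ℝ, ∀ x, f x = p * x + q)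
    {a b t : ℝ} (ha : f a < 0) (hb : f b < 0) (ht : t ∈ Icc a b) : f t < 0 := by
  obtain ⟨p, q, hf⟩ := hf
  rw [hf] at ha hb ⊢
  rcases le_total 0 p with hp | hp <;> nlinarith [ht.1, ht.2]

theorem signs_at_neg_eight_and_neg_seven (n : ℕ) (hn1 : 25 ≤ n) (hn2 : n ≤ 51) :
    0 ≤ deriv (Ipoly n (-8)) 1 ∧ deriv (Ipoly n (-7)) 1 ≤ 0 ∧
      deriv (deriv (Ipoly n (-8))) 1 - deriv (Ipoly n (-8)) 1 < 0 ∧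
      deriv (deriv (Ipoly n (-7))) 1 - deriv (Ipoly n (-7)) 1 < 0 ∧
      Jpoly n (-8) 1 < 0 ∧ Jpoly n (-7) 1 < 0 := by
  simp only [deriv_Ipoly, deriv_deriv_Ipoly, Ipolynomial, derivative_add, derivative_sub,
    derivative_monomial, eval_add, eval_sub, eval_monomial, Jpoly]
  interval_cases n <;> norm_num

theorem stmt_17 (n : ℕ) (hn1 : 25 ≤ n) (hn2 : n ≤ 51) :
    ∃ τ : ℝ, deriv (Ipoly n τ) 1 = 0 ∧ deriv (deriv (Ipoly n τ)) 1 < 0 ∧ Jpoly n τ 1 < 0 := by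
  obtain ⟨hI8, hI7, hgap8, hgap7, hJ8, hJ7⟩ := signs_at_neg_eight_and_neg_seven n hn1 hn2
  obtain ⟨τ, hτ, hroot⟩ : ∃ τ ∈ Icc (-8 : ℝ) (-7), deriv (Ipoly n τ) 1 = 0 :=
    intermediate_value_Icc' (by norm_num) (continuous_deriv_Ipoly_one n).continuousOn
      ⟨hI7, hI8⟩
  refine ⟨τ, hroot, ?_, lt_zero_of_affine_of_mem_Icc (Jpoly_one_affine n) hJ8 hJ7 hτ⟩
  have hgap := lt_zero_of_affine_of_mem_Icc (deriv_deriv_sub_deriv_Ipoly_one_affine n)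
    hgap8 hgap7 hτ
  rwa [hroot, sub_zero] at hgap
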